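/- arXiv:1601.06396 — 2 statements merged into one kernel-verified Lean document; each statement's English description precedes it below -/
import Mathlib

section
/- Let J₁ ⊂ J be such that sup_{I ∈ J₁} mes(I) < 2π, and let 𝒳 ⊂ ∪_{I ∈ J₁} ℓ₂^{BL}(I) be a set bounded in ℓ₂ such that ∑_{t ≤ τ} |x(t)|² → 0 as τ → −∞ uniformly over x ∈ 𝒳. Then for every ε > 0 there exist an integer τ < 0 and a real-valued sequence k̂ : {1,2,3,...} → ℝ such that for every x ∈ 𝒳, every I ∈ J₁ with x ∈ ℓ₂^{BL}(I), and every t ≥ 1, |x(t) − x̂(t)| ≤ ε, where x̂(t) = e^{iω_I t} ∑_{s=τ}^{t−1} k̂(t−s) e^{−iω_I s} x(s) is a finite sum. -/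
/-!
The kernel depends only on the width of the arcs. For `h < π` there is a real polynomial `p`
with `p(0) = 0` and `|1 - p(e^{iθ})| ≤ η` for `|θ| ≤ h`: take `1 - p` to be a Taylor truncation
of `exp (L Q)`, where `Q(0) = 0` and `Re Q(e^{iθ}) = sin^{2K}(θ/2) - C(2K,K)/4^K`, which is
negative on the arc once `K` is large. Filtering `x` by the coefficients of `p` after demodulating
at `ω_I` leaves the prediction error `(1/2π) ∫ X(ω) e^{iωt} (1 - p(e^{-i(ω - ω_I)})) dω`, of size at
most `η/(2π) ‖X‖₁`, and `‖X‖₁` is controlled by the `ℓ₂` bound through Parseval. As `p` has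
finite degree, only `x(t - deg p), …, x(t - 1)` enter the predictor.
-/

open MeasureTheory Complex Real Set Filter

noncomputable section

/-- Two-sided square-summable sequences: membership in `ℓ₂`. -/
def MemL2 (x : ℤ → ℂ) : Prop := Summable fun t => ‖x t‖ ^ 2

/-- Absolutely summable sequences: membership in `ℓ₁(ℤ)`. -/
def MemL1 (x : ℤ → ℂ) : Prop := Summable fun t => ‖x t‖

/-- Inverse Z-transform of a function on `(−π, π]`:
`x(t) = (1/2π) ∫_{−π}^{π} X(e^{iω}) e^{iωt} dω`. -/
def invZ (X : ℝ → ℂ) (t : ℤ) : ℂ :=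
  ((1 / (2 * π) : ℝ) : ℂ) *
    ∫ ω in Set.Ioc (-π) π, X ω * Complex.exp (Complex.I * (ω : ℂ) * (t : ℂ))

/-- `x ∈ ℓ₂^{BL}(S)`: `x` is square-summable and its Z-transform vanishes a.e. outside `S`,
expressed by saying that `x` is the inverse Z-transform of some `X ∈ L²` of the circle
vanishing a.e. outside `S`. -/
def BandLimited (S : Set ℝ) (x : ℤ → ℂ) : Prop :=
  MemL2 x ∧ ∃ X : ℝ → ℂ,
    MemLp X 2 (volume.restrict (Set.Ioc (-π) π)) ∧
    (∀ᵐ ω ∂volume.restrict (Set.Ioc (-π) π), ω ∉ S → X ω = 0) ∧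
    ∀ t : ℤ, x t = invZ X t

/-- An element of the class `J`: a proper connected arc of the circle, recorded via the
angle `mid` of its middle point and its half-length `halfLen` (so `mes(I) = 2·halfLen`);
`halfLen < π` makes the complementary set nonempty. -/
structure Arc where
  mid : ℝ
  halfLen : ℝ
  mid_mem : mid ∈ Set.Ioc (-π) π
  halfLen_pos : 0 < halfLen
  halfLen_lt : halfLen < π

/-- The subset of `(−π, π]` corresponding to the arc `{e^{iω} : |ω − mid| < halfLen (mod 2π)}`. -/
def Arc.set (I : Arc) : Set ℝ :=
  {ω | ω ∈ Set.Ioc (-π) π ∧ ∃ k : ℤ, |ω - I.mid + 2 * π * (k : ℝ)| < I.halfLen}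

/-- One-sided sequences, defined on `{t ∈ ℤ : t ≤ 0}`. -/
abbrev NegSeq := {t : ℤ // t ≤ 0} → ℂ

/-- Membership in `ℓ₂⁻`. -/
def MemL2Neg (x : NegSeq) : Prop := Summable fun t => ‖x t‖ ^ 2

/-- `x ∈ ℓ₂^{−,LBL}(S)`: `x` is the trace on `{t ≤ 0}` of a band-limited sequence with
spectrum in `S`. -/
def LBL (S : Set ℝ) (x : NegSeq) : Prop :=
  ∃ xBL : ℤ → ℂ, BandLimited S xBL ∧ ∀ t : {t : ℤ // t ≤ 0}, x t = xBL t.1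

/-- `p` is the optimal approximation of `x` in `ℓ₂^{−,LBL}(S)`, i.e. a minimizer of
`∑_{t≤0} |p(t) − x(t)|²` over `ℓ₂^{−,LBL}(S)`. -/
def IsOptApprox (S : Set ℝ) (x p : NegSeq) : Prop :=
  LBL S p ∧ ∀ z : NegSeq, LBL S z →
    (∑' t, ‖p t - x t‖ ^ 2) ≤ ∑' t, ‖z t - x t‖ ^ 2

/-- `sinc(u) = sin(u)/u` (with value `1` at `u = 0`). -/
def sinc (u : ℝ) : ℝ := if u = 0 then 1 else Real.sin u / u

section Kernel

open Polynomial

/-- `(-1) ^ K * (1 - w) ^ (2 * K) / 4 ^ K = ∑ m, havCoeff K m * w ^ m`. -/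
def havCoeff (K m : ℕ) : ℝ := (-1) ^ (K + m) * (2 * K).choose m / 4 ^ K

/-- The analytic half of the cosine expansion of `((1 - cos θ) / 2) ^ K`, without its constant
term `havCoeff K K`. -/
def havPowPoly (K : ℕ) : ℝ[X] :=
  ∑ m ∈ (Finset.range (2 * K + 1)).erase K, C (havCoeff K m) * X ^ ((m : ℤ) - K).natAbs

theorem havPowPoly_coeff_zero (K : ℕ) : (havPowPoly K).coeff 0 = 0 := by
  simp only [havPowPoly, finsetSum_coeff, coeff_C_mul_X_pow]
  refine Finset.sum_eq_zero fun m hm => if_neg ?_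
  have := Finset.ne_of_mem_erase hm
  omega

theorem hav_pow_eq_sum_cos (K : ℕ) (θ : ℝ) :
    ((1 - Real.cos θ) / 2) ^ K =
      ∑ m ∈ Finset.range (2 * K + 1), havCoeff K m * Real.cos ((((m : ℤ) - K : ℤ) : ℝ) * θ) := by
  set w := cexp (θ * I) with hw
  have hw0 : w ≠ 0 := Complex.exp_ne_zero _
  have hinv : w⁻¹ = cexp (-θ * I) := by rw [neg_mul, Complex.exp_neg]
  have hexp : ∀ m : ℕ, cexp (((((m : ℤ) - K : ℤ) : ℝ) * θ : ℝ) * I) = w ^ m * (w ^ K)⁻¹ := by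
    intro m
    rw [← Complex.exp_nat_mul, ← Complex.exp_nat_mul, ← Complex.exp_neg, ← Complex.exp_add]
    push_cast; ring_nf
  -- on the unit circle, `(1 - w)² / w = w⁻¹ - 2 + w = 2 cos θ - 2`
  have hsq : (1 - w) ^ 2 * w⁻¹ = -4 * (((1 - Real.cos θ) / 2 : ℝ) : ℂ) := by
    rw [Complex.ofReal_div, Complex.ofReal_sub, Complex.ofReal_cos, Complex.cos, ← hinv, ← hw]
    push_cast
    field_simp
    ring
  have key : ∑ m ∈ Finset.range (2 * K + 1), (havCoeff K m : ℂ) * (w ^ m * (w ^ K)⁻¹)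
      = (((1 - Real.cos θ) / 2) ^ K : ℝ) := calc
    _ = (-1) ^ K / 4 ^ K * (w ^ K)⁻¹ * (-w + 1) ^ (2 * K) := by
        rw [add_pow, Finset.mul_sum]
        refine Finset.sum_congr rfl fun m _ => ?_
        simp only [havCoeff]; push_cast
        rw [neg_pow, pow_add]; ring
    _ = (-1) ^ K / 4 ^ K * ((1 - w) ^ 2 * w⁻¹) ^ K := by
        rw [mul_pow, ← pow_mul, inv_pow]; ring
    _ = (((1 - Real.cos θ) / 2) ^ K : ℝ) := by
        rw [hsq, mul_pow]; push_cast
        field_simp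
        rw [← mul_pow]; norm_num
  simp only [← hexp] at key
  have := congrArg Complex.re key
  simp only [Complex.re_sum, Complex.re_ofReal_mul, Complex.exp_ofReal_mul_I_re,
    Complex.ofReal_re] at this
  exact this.symm

theorem re_aeval_havPowPoly (K : ℕ) (θ : ℝ) :
    (aeval (cexp (θ * I)) (havPowPoly K)).re
      = ((1 - Real.cos θ) / 2) ^ K - K.centralBinom / 4 ^ K := by
  have hK : havCoeff K K = K.centralBinom / 4 ^ K := by
    rw [havCoeff, ← two_mul, pow_mul, Nat.centralBinom]; norm_num
  rw [hav_pow_eq_sum_cos, ← Finset.add_sum_erase _ _ (Finset.mem_range.2 (by omega : K < 2 * K + 1)),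
    hK, sub_self, Int.cast_zero, zero_mul, Real.cos_zero, mul_one, add_sub_cancel_left]
  simp only [havPowPoly, map_sum, map_mul, aeval_C, aeval_X_pow, Complex.re_sum,
    Complex.coe_algebraMap, Complex.re_ofReal_mul]
  refine Finset.sum_congr rfl fun m _ => ?_
  rw [← Complex.exp_nat_mul, ← mul_assoc, ← Complex.ofReal_natCast, ← Complex.ofReal_mul,
    Complex.exp_ofReal_mul_I_re, Nat.cast_natAbs, Int.cast_abs]
  rcases abs_choice (((m : ℤ) - K : ℤ) : ℝ) with h | h <;> simp only [h, neg_mul, Real.cos_neg]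

/-- On the arc `|θ| ≤ h < π` the haversine `(1 - cos θ) / 2` stays below `1`, so its `K`-th power
decays geometrically, while the mean `centralBinom K / 4 ^ K` of that power decays only like
`1 / √K`. -/
theorem exists_poly_coeff_zero_re_aeval_le_neg {h : ℝ} (hh0 : 0 ≤ h) (hh : h < π) :
    ∃ Q : ℝ[X], Q.coeff 0 = 0 ∧ ∃ d > 0, ∀ θ : ℝ, |θ| ≤ h → (aeval (cexp (θ * I)) Q).re ≤ -d := by
  set s := (1 - Real.cos h) / 2 with hs
  have hs0 : 0 ≤ s := by rw [hs]; linarith [Real.cos_le_one h]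
  have hs1 : s < 1 := by
    have := Real.cos_lt_cos_of_nonneg_of_le_pi hh0 le_rfl hh
    rw [Real.cos_pi] at this
    rw [hs]; linarith
  obtain ⟨K, hKs, hK⟩ := (((tendsto_self_mul_const_pow_of_lt_one hs0 hs1).eventually
    (gt_mem_nhds (by norm_num : (0 : ℝ) < 1 / 2))).and (eventually_ge_atTop 1)).exists
  have hK0 : (0 : ℝ) < K := by exact_mod_cast hK
  have hbinom : 1 / (2 * K) ≤ (K.centralBinom : ℝ) / 4 ^ K := by
    rw [div_le_div_iff₀ (by positivity) (by positivity), one_mul, mul_comm]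
    exact_mod_cast Nat.four_pow_le_two_mul_self_mul_centralBinom K hK
  have hsK : s ^ K < 1 / (2 * K) := by
    rw [lt_div_iff₀ (by positivity)]
    linarith
  refine ⟨havPowPoly K, havPowPoly_coeff_zero K, _, sub_pos.2 (hsK.trans_le hbinom),
    fun θ hθ => ?_⟩
  have hcos : Real.cos h ≤ Real.cos θ := by
    rw [← Real.cos_abs θ]
    exact Real.cos_le_cos_of_nonneg_of_le_pi (abs_nonneg θ) hh.le hθ
  have hpow : ((1 - Real.cos θ) / 2) ^ K ≤ s ^ K :=
    pow_le_pow_left₀ (by linarith [Real.cos_le_one θ]) (by rw [hs]; linarith) K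
  rw [re_aeval_havPowPoly]
  linarith

/-- `q` is a Taylor polynomial of `exp` composed with `Q`. -/
theorem exists_poly_approx_cexp_aeval (Q : ℝ[X]) (hQ : Q.coeff 0 = 0) (B : ℝ) {η : ℝ}
    (hη : 0 < η) : ∃ q : ℝ[X], q.coeff 0 = 1 ∧
      ∀ z : ℂ, ‖aeval z Q‖ ≤ B → ‖aeval z q - cexp (aeval z Q)‖ ≤ η := by
  obtain ⟨M, ⟨hMB, hMη⟩, hM⟩ := (((tendsto_natCast_atTop_atTop (R := ℝ)).eventually_ge_atTop
    (2 * B)).and ((FloorSemiring.tendsto_pow_div_factorial_atTop B).eventually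
      (gt_mem_nhds (half_pos hη))) |>.and (eventually_ge_atTop 1)).exists
  refine ⟨∑ n ∈ Finset.range M, C (1 / n.factorial : ℝ) * Q ^ n, ?_, fun z hz => ?_⟩
  · rw [coeff_zero_eq_eval_zero] at hQ ⊢
    simp only [eval_finsetSum, eval_mul, eval_C, eval_pow, hQ]
    rw [Finset.sum_eq_single_of_mem 0 (Finset.mem_range.2 hM)] <;> simp +contextual
  · have hsum : aeval z (∑ n ∈ Finset.range M, C (1 / n.factorial : ℝ) * Q ^ n)
        = ∑ n ∈ Finset.range M, aeval z Q ^ n / n.factorial := by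
      simp [map_sum, div_eq_inv_mul]
    rw [hsum, norm_sub_rev]
    refine (Complex.exp_bound' ?_).trans ?_
    · rw [div_le_iff₀ (by positivity), Nat.cast_succ]
      linarith
    · have : ‖aeval z Q‖ ^ M / M.factorial ≤ B ^ M / M.factorial := by gcongr
      linarith

/-- `1 - p = exp (L Q)` up to a Taylor error, and `exp (L Q)` is small on the arc because
`Re Q ≤ -d` there. -/
theorem exists_poly_coeff_zero_approx_one_on_arc {h η : ℝ} (hh0 : 0 ≤ h) (hh : h < π)
    (hη : 0 < η) : ∃ p : ℝ[X], p.coeff 0 = 0 ∧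
      ∀ θ : ℝ, |θ| ≤ h → ‖1 - aeval (cexp (θ * I)) p‖ ≤ η := by
  obtain ⟨Q, hQ0, d, hd, hQ⟩ := exists_poly_coeff_zero_re_aeval_le_neg hh0 hh
  set L := |Real.log (2 / η)| / d
  obtain ⟨B, hB⟩ := (isCompact_sphere (0 : ℂ) 1).exists_bound_of_continuousOn
    (Polynomial.continuous_aeval (C L * Q)).continuousOn
  obtain ⟨q, hq0, hq⟩ :=
    exists_poly_approx_cexp_aeval (C L * Q) (by simp [hQ0]) B (half_pos hη)
  refine ⟨1 - q, by simp [hq0], fun θ hθ => ?_⟩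
  set w := cexp (θ * I)
  have hexp : ‖cexp (aeval w (C L * Q))‖ ≤ η / 2 := calc
    ‖cexp (aeval w (C L * Q))‖ = Real.exp (L * (aeval w Q).re) := by
      simp [Complex.norm_exp]
    _ ≤ Real.exp (Real.log (η / 2)) := by
      gcongr
      have hLd : L * d = |Real.log (2 / η)| := div_mul_cancel₀ _ hd.ne'
      have hlog : Real.log (η / 2) = -Real.log (2 / η) := by
        rw [← Real.log_inv, inv_div]
      have : L * (aeval w Q).re ≤ -(L * d) := by
        rw [← mul_neg]; exact mul_le_mul_of_nonneg_left (hQ θ hθ) (by positivity)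
      linarith [le_abs_self (Real.log (2 / η))]
    _ = η / 2 := Real.exp_log (half_pos hη)
  rw [map_sub, map_one, sub_sub_cancel]
  calc ‖aeval w q‖ ≤ ‖aeval w q - cexp (aeval w (C L * Q))‖ + ‖cexp (aeval w (C L * Q))‖ :=
        norm_le_norm_sub_add _ _
    _ ≤ η / 2 + η / 2 := add_le_add (hq w (hB w (by simp [w]))) hexp
    _ = η := add_halves η

end Kernel

theorem IntegrableOn.mul_continuous_Ioc {a b : ℝ} {f g : ℝ → ℂ} (hf : IntegrableOn f (Ioc a b))
    (hg : Continuous g) : IntegrableOn (fun x => f x * g x) (Ioc a b) :=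
  hf.mul_continuousOn_of_subset hg.continuousOn measurableSet_Ioc isCompact_Icc
    Ioc_subset_Icc_self

theorem invZ_eq_fourierCoeffOn (X : ℝ → ℂ) (t : ℤ) :
    invZ X t = fourierCoeffOn (neg_lt_self Real.pi_pos) X (-t) := by
  rw [fourierCoeffOn_eq_integral, intervalIntegral.integral_of_le (neg_le_self Real.pi_pos.le),
    invZ, sub_neg_eq_add, ← two_mul, neg_neg, Complex.real_smul]
  congr 1
  refine setIntegral_congr_fun measurableSet_Ioc fun ω _ => ?_
  rw [fourier_coe_apply, smul_eq_mul, mul_comm]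
  congr 2
  field_simp
  push_cast
  ring

theorem tsum_sq_norm_invZ {X : ℝ → ℂ} (hX : MemLp X 2 (volume.restrict (Ioc (-π) π))) :
    ∑' t, ‖invZ X t‖ ^ 2 = (2 * π)⁻¹ * ∫ ω in Ioc (-π) π, ‖X ω‖ ^ 2 := by
  have := tsum_sq_fourierCoeffOn (neg_lt_self Real.pi_pos) hX
  rw [sub_neg_eq_add, ← two_mul, smul_eq_mul,
    intervalIntegral.integral_of_le (neg_le_self Real.pi_pos.le)] at this
  rw [← this, ← (Equiv.neg ℤ).tsum_eq]
  simp [invZ_eq_fourierCoeffOn]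

/-- From `‖X‖ ≤ (‖X‖² + 1) / 2` and Parseval. -/
theorem integral_norm_le_of_tsum_sq_norm_invZ_le {X : ℝ → ℂ}
    (hX : MemLp X 2 (volume.restrict (Ioc (-π) π))) {C : ℝ}
    (hC : ∑' t, ‖invZ X t‖ ^ 2 ≤ C) : ∫ ω in Ioc (-π) π, ‖X ω‖ ≤ π * (C + 1) := by
  have hsq : ∫ ω in Ioc (-π) π, ‖X ω‖ ^ 2 ≤ 2 * π * C := by
    rw [tsum_sq_norm_invZ hX] at hC
    rwa [inv_mul_le_iff₀ (by positivity)] at hC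
  have hvol : (volume.restrict (Ioc (-π) π)).real univ = 2 * π := by
    rw [measureReal_restrict_apply_univ, Real.volume_real_Ioc_of_le (by linarith [Real.pi_pos])]
    ring
  calc ∫ ω in Ioc (-π) π, ‖X ω‖ ≤ ∫ ω in Ioc (-π) π, (‖X ω‖ ^ 2 + 1) / 2 := by
        refine integral_mono (hX.integrable one_le_two).norm
          ((hX.integrable_norm_pow two_ne_zero |>.add (integrable_const 1)).div_const 2)
          fun ω => ?_
        nlinarith [sq_nonneg (‖X ω‖ - 1)]
    _ = ((∫ ω in Ioc (-π) π, ‖X ω‖ ^ 2) + 2 * π) / 2 := by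
        rw [integral_div, integral_add (hX.integrable_norm_pow two_ne_zero) (integrable_const 1),
          integral_const, hvol, smul_eq_mul, mul_one]
    _ ≤ π * (C + 1) := by linarith

theorem norm_invZ_le (Y : ℝ → ℂ) (t : ℤ) :
    ‖invZ Y t‖ ≤ (2 * π)⁻¹ * ∫ ω in Ioc (-π) π, ‖Y ω‖ := by
  rw [invZ, norm_mul, Complex.norm_real, Real.norm_of_nonneg (by positivity), one_div]
  gcongr
  refine (norm_integral_le_integral_norm _).trans_eq (integral_congr_ae (ae_of_all _ fun ω => ?_))
  simp only [norm_mul]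
  rw [show Complex.I * ω * t = ((ω * t : ℝ) : ℂ) * Complex.I by push_cast; ring,
    Complex.norm_exp_ofReal_mul_I, mul_one]

theorem exp_mul_sum_Icc_coeff_eq_sum_range (p : Polynomial ℝ) (hp : p.coeff 0 = 0) (μ : ℝ)
    (x : ℤ → ℂ) {τ t : ℤ} (hτ : τ + p.natDegree ≤ t) :
    cexp (Complex.I * μ * t) * ∑ s ∈ Finset.Icc τ (t - 1),
        ((p.coeff (t - s).toNat : ℝ) : ℂ) * cexp (-Complex.I * μ * s) * x s
      = ∑ n ∈ Finset.range (p.natDegree + 1),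
          (p.coeff n : ℂ) * cexp (μ * n * Complex.I) * x (t - n) := by
  rw [Finset.mul_sum]
  refine Finset.sum_bij_ne_zero (fun s _ _ => (t - s).toNat) ?_ ?_ ?_ ?_
  · intro s _ hs
    have : p.coeff (t - s).toNat ≠ 0 := by
      contrapose! hs; simp [hs]
    exact Finset.mem_range.2 (Nat.lt_succ_of_le (Polynomial.le_natDegree_of_ne_zero this))
  · intro s₁ hs₁ _ s₂ hs₂ _ h
    simp only [Finset.mem_Icc] at hs₁ hs₂
    omega
  · intro n hn hn0
    have hcoeff : p.coeff n ≠ 0 := by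
      contrapose! hn0; simp [hn0]
    have hn1 : n ≠ 0 := by rintro rfl; exact hcoeff hp
    have := Polynomial.le_natDegree_of_ne_zero hcoeff
    exact ⟨t - n, Finset.mem_Icc.2 (by omega), by simpa using hn0, by omega⟩
  · intro s hs _
    simp only [Finset.mem_Icc] at hs
    have hts : (((t - s).toNat : ℕ) : ℤ) = t - s := Int.toNat_of_nonneg (by omega)
    have hexp : cexp (Complex.I * μ * t) * cexp (-Complex.I * μ * s)
        = cexp (μ * ((t - s).toNat : ℕ) * Complex.I) := by
      rw [← Complex.exp_add, ← Int.cast_natCast, hts]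
      push_cast
      ring_nf
    rw [← hexp, hts, sub_sub_cancel]
    ring

theorem invZ_mul_aeval {X : ℝ → ℂ} (hX : IntegrableOn X (Ioc (-π) π)) (p : Polynomial ℝ)
    (μ : ℝ) (t : ℤ) :
    invZ (fun ω => X ω * Polynomial.aeval (cexp (-((ω - μ) * Complex.I))) p) t
      = ∑ n ∈ Finset.range (p.natDegree + 1),
          (p.coeff n : ℂ) * cexp (μ * n * Complex.I) * invZ X (t - n) := by
  have hterm : ∀ ω : ℝ, ∀ n : ℕ,
      X ω * (p.coeff n • cexp (-((ω - μ) * Complex.I)) ^ n) * cexp (Complex.I * ω * t)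
        = (p.coeff n : ℂ) * cexp (μ * n * Complex.I) * (X ω * cexp (Complex.I * ω * ↑(t - n))) := by
    intro ω n
    have hexp : cexp (n * -((ω - μ) * Complex.I)) * cexp (Complex.I * ω * t)
        = cexp (μ * n * Complex.I) * cexp (Complex.I * ω * ↑(t - n)) := by
      rw [← Complex.exp_add, ← Complex.exp_add]
      push_cast
      ring_nf
    rw [Complex.real_smul, ← Complex.exp_nat_mul]
    linear_combination (X ω * p.coeff n) * hexp
  simp only [invZ, Polynomial.aeval_eq_sum_range, Finset.mul_sum, Finset.sum_mul, hterm]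
  rw [integral_finsetSum _ fun n _ =>
    (IntegrableOn.mul_continuous_Ioc hX (by fun_prop)).const_mul _, Finset.mul_sum]
  refine Finset.sum_congr rfl fun n _ => ?_
  rw [integral_const_mul]
  ring

theorem invZ_sub_sum_eq_invZ_mul_one_sub {X : ℝ → ℂ} (hX : IntegrableOn X (Ioc (-π) π))
    (p : Polynomial ℝ) (μ : ℝ) (t : ℤ) :
    invZ X t - ∑ n ∈ Finset.range (p.natDegree + 1),
        (p.coeff n : ℂ) * cexp (μ * n * Complex.I) * invZ X (t - n)
      = invZ (fun ω => X ω * (1 - Polynomial.aeval (cexp (-((ω - μ) * Complex.I))) p)) t := by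
  rw [← invZ_mul_aeval hX, invZ, invZ, invZ, ← mul_sub,
    ← integral_sub (IntegrableOn.mul_continuous_Ioc hX (by fun_prop))
      (by simp only [mul_assoc]; exact IntegrableOn.mul_continuous_Ioc hX (by fun_prop))]
  congr 2 with ω
  ring

theorem Arc.exists_exp_eq_of_mem_set (A : Arc) {ω : ℝ} (hω : ω ∈ A.set) :
    ∃ θ : ℝ, |θ| < A.halfLen ∧ cexp (-((ω - A.mid) * Complex.I)) = cexp (θ * Complex.I) := by
  obtain ⟨-, k, hk⟩ := hω
  refine ⟨-(ω - A.mid + 2 * π * k), by rwa [abs_neg], ?_⟩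
  rw [show -((ω - A.mid : ℂ) * Complex.I)
      = ((-(ω - A.mid + 2 * π * k) : ℝ) : ℂ) * Complex.I + k * (2 * π * Complex.I) by
    push_cast; ring, Complex.exp_add, Complex.exp_int_mul_two_pi_mul_I, mul_one]

theorem stmt_2_general (𝒥 : Set Arc) (c : ℝ) (hc : c < 2 * π)
    (hmes : ∀ I ∈ 𝒥, 2 * I.halfLen ≤ c)
    (𝒳 : Set (ℤ → ℂ))
    (C : ℝ) (hbdd : ∀ x ∈ 𝒳, ∑' t : ℤ, ‖x t‖ ^ 2 ≤ C)
    (ε : ℝ) (hε : 0 < ε) :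
    ∃ τ : ℤ, τ < 0 ∧ ∃ k : ℤ → ℝ,
      ∀ x ∈ 𝒳, ∀ I ∈ 𝒥, BandLimited I.set x → ∀ t : ℤ, 1 ≤ t →
        ‖x t - Complex.exp (Complex.I * (I.mid : ℂ) * (t : ℂ)) *
            ∑ s ∈ Finset.Icc τ (t - 1), ((k (t - s) : ℝ) : ℂ)
              * Complex.exp (-Complex.I * (I.mid : ℂ) * (s : ℂ)) * x s‖ ≤ ε := by
  set η := ε / (|C| + 1)
  obtain ⟨p, hp0, hp⟩ := exists_poly_coeff_zero_approx_one_on_arc (le_max_right (c / 2) 0)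
    (max_lt (by linarith) Real.pi_pos) (by positivity : 0 < η)
  refine ⟨-(p.natDegree + 1), by omega, fun n => p.coeff n.toNat, ?_⟩
  rintro x hx I hI ⟨-, X, hX2, hXsupp, hxX⟩ t ht
  obtain rfl : x = invZ X := funext hxX
  rw [exp_mul_sum_Icc_coeff_eq_sum_range p hp0 I.mid _ (by omega),
    invZ_sub_sum_eq_invZ_mul_one_sub (hX2.integrable one_le_two)]
  have hpoint : ∀ᵐ ω ∂volume.restrict (Ioc (-π) π),
      ‖X ω * (1 - Polynomial.aeval (cexp (-((ω - I.mid) * Complex.I))) p)‖ ≤ η * ‖X ω‖ := by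
    filter_upwards [hXsupp] with ω hω
    by_cases hωI : ω ∈ I.set
    · obtain ⟨θ, hθ, hexp⟩ := I.exists_exp_eq_of_mem_set hωI
      rw [norm_mul, hexp, mul_comm]
      gcongr
      exact hp θ (hθ.le.trans ((le_div_iff₀' two_pos).2 (hmes I hI) |>.trans (le_max_left _ _)))
    · simp [hω hωI]
  calc _ ≤ (2 * π)⁻¹ * ∫ ω in Ioc (-π) π,
        ‖X ω * (1 - Polynomial.aeval (cexp (-((ω - I.mid) * Complex.I))) p)‖ := norm_invZ_le _ _
    _ ≤ (2 * π)⁻¹ * ∫ ω in Ioc (-π) π, η * ‖X ω‖ :=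
        mul_le_mul_of_nonneg_left (integral_mono_of_nonneg (ae_of_all _ fun _ => norm_nonneg _)
          ((hX2.integrable one_le_two).norm.const_mul η) hpoint) (by positivity)
    _ ≤ (2 * π)⁻¹ * (η * (π * (C + 1))) := by
        rw [integral_const_mul]
        gcongr
        exact integral_norm_le_of_tsum_sq_norm_invZ_le hX2 (hbdd _ hx)
    _ = η * (C + 1) / 2 := by field_simp
    _ ≤ η * (|C| + 1) := by
        have hη : 0 ≤ η := by positivity
        nlinarith [mul_nonneg hη (sub_nonneg.2 (le_abs_self C)), abs_nonneg C]
    _ = ε := div_mul_cancel₀ _ (by positivity)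

/-- under the additional assumption that the tails `∑_{t ≤ τ} |x(t)|²` vanish as
`τ → −∞` uniformly over the bounded set `𝒳 ⊂ ∪_{I ∈ 𝒥₁} ℓ₂^{BL}(I)` (with
`sup_{I ∈ 𝒥₁} mes(I) < 2π`), prediction for all times `t ≥ 1` within error `ε` is possible using
only finitely many observations `x(τ), ..., x(t−1)`:
`x̂(t) = e^{iω_I t} ∑_{s=τ}^{t−1} k̂(t−s) e^{−iω_I s} x(s)`. -/
theorem stmt_2 (𝒥 : Set Arc) (c : ℝ) (hc : c < 2 * π)
    (hmes : ∀ I ∈ 𝒥, 2 * I.halfLen ≤ c)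
    (𝒳 : Set (ℤ → ℂ)) (hBL : ∀ x ∈ 𝒳, ∃ I ∈ 𝒥, BandLimited I.set x)
    (C : ℝ) (hbdd : ∀ x ∈ 𝒳, ∑' t : ℤ, ‖x t‖ ^ 2 ≤ C)
    (htail : ∀ δ : ℝ, 0 < δ → ∃ τ₀ : ℤ, ∀ x ∈ 𝒳, ∑' n : ℕ, ‖x (τ₀ - (n : ℤ))‖ ^ 2 ≤ δ)
    (ε : ℝ) (hε : 0 < ε) :
    ∃ τ : ℤ, τ < 0 ∧ ∃ k : ℤ → ℝ,
      ∀ x ∈ 𝒳, ∀ I ∈ 𝒥, BandLimited I.set x → ∀ t : ℤ, 1 ≤ t →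
        ‖x t - Complex.exp (Complex.I * (I.mid : ℂ) * (t : ℂ)) *
            ∑ s ∈ Finset.Icc τ (t - 1), ((k (t - s) : ℝ) : ℂ)
              * Complex.exp (-Complex.I * (I.mid : ℂ) * (s : ℂ)) * x s‖ ≤ ε :=
  stmt_2_general 𝒥 c hc hmes 𝒳 C hbdd ε hε
end
end

section
/- For every I ∈ J and every x ∈ ℓ₂^{−,LBL}(I), there exists a unique x_BL ∈ ℓ₂^{BL}(I) such that x(t) = x_BL(t) for all t ≤ 0. In other words, a band-limited sequence with spectrum in a proper arc is uniquely determined by its trace on {t ≤ 0}. -/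
open MeasureTheory Complex Real Set Filter

noncomputable section

/-!
Let `X` be the difference of the spectra of two band-limited sequences that agree on `t ≤ 0`,
and put `p ω = e^{-iω}`. The Cauchy transform `G w = ∫ X ω / (p ω - w) dω` is holomorphic off
the closed arc `K = p(I)` of the unit circle. For `|w| > 1` its expansion in powers of `1/w`
has as coefficients the values `invZ X t`, `t ≤ 0` (up to the factor `-2π`), so `G` vanishes
there. As `K` misses a point of the circle, a disc around that point connects the outside of
the circle to the unit disc inside `Kᶜ`, so `G` vanishes on the unit disc as well. There the
Taylor coefficients of `G` are the values `invZ X t`, `t ≥ 1`, which therefore vanish too.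
-/

open Metric Topology

theorem hasDerivAt_div_const_sub (c d w : ℂ) (h : d - w ≠ 0) :
    HasDerivAt (fun v => c / (d - v)) (c / (d - w) ^ 2) w := by
  have := (((hasDerivAt_id w).const_sub d).inv h).const_mul c
  simpa [div_eq_mul_inv] using this

section CauchyTransform

variable {α : Type*} [MeasurableSpace α] {μ : Measure α} {f p : α → ℂ}

def cauchyTransform (μ : Measure α) (f p : α → ℂ) (w : ℂ) : ℂ :=
  ∫ a, f a / (p a - w) ∂μ

theorem hasSum_integral_mul_geometric {q : α → ℂ} (hf : Integrable f μ)
    (hq : AEStronglyMeasurable q μ) {r : ℝ} (hr₀ : 0 ≤ r) (hr : r < 1) (hqr : ∀ a, ‖q a‖ ≤ r) :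
    HasSum (fun n => ∫ a, f a * q a ^ n ∂μ) (∫ a, f a * (1 - q a)⁻¹ ∂μ) := by
  refine hasSum_integral_of_dominated_convergence (fun n a => ‖f a‖ * r ^ n)
    (fun n => hf.aestronglyMeasurable.mul (hq.pow n)) (fun n => ae_of_all _ fun a => ?_)
    (ae_of_all _ fun a => (summable_geometric_of_lt_one hr₀ hr).mul_left _) ?_
    (ae_of_all _ fun a =>
      (hasSum_geometric_of_norm_lt_one ((hqr a).trans_lt hr)).mul_left (f a))
  · rw [norm_mul, norm_pow]
    gcongr
    exact hqr a
  · simp_rw [tsum_mul_left, tsum_geometric_of_lt_one hr₀ hr]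
    exact hf.norm.mul_const _

theorem hasSum_cauchyTransform_of_one_lt_norm (hf : Integrable f μ)
    (hp : AEStronglyMeasurable p μ) (hp₁ : ∀ a, ‖p a‖ ≤ 1) {w : ℂ} (hw : 1 < ‖w‖) :
    HasSum (fun n => -(∫ a, f a * p a ^ n ∂μ) / w ^ (n + 1)) (cauchyTransform μ f p w) := by
  have hw₀ : w ≠ 0 := norm_pos_iff.mp (one_pos.trans hw)
  have hpw : ∀ a, p a ≠ w := fun a h => by
    have := hp₁ a
    rw [h] at this
    linarith
  have hsum := hasSum_integral_mul_geometric (f := fun a => -f a / w) (q := fun a => p a / w)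
    (hf.neg.div_const w) (hp.aemeasurable.div_const w).aestronglyMeasurable
    (inv_nonneg.2 (norm_nonneg w)) (inv_lt_one_of_one_lt₀ hw) fun a => by
      rw [norm_div, div_eq_mul_inv]
      exact mul_le_of_le_one_left (inv_nonneg.2 (norm_nonneg w)) (hp₁ a)
  convert hsum using 1
  · ext n
    rw [← integral_neg, ← integral_div]
    congr 1
    ext a
    rw [div_pow, pow_succ]
    field_simp
  · refine integral_congr_ae (ae_of_all _ fun a => ?_)
    have := sub_ne_zero.mpr (hpw a)
    have := sub_ne_zero.mpr (hpw a).symm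
    field_simp
    ring

theorem hasSum_cauchyTransform_of_norm_lt_one (hf : Integrable f μ)
    (hp : AEStronglyMeasurable p μ) (hp₁ : ∀ a, 1 ≤ ‖p a‖) {w : ℂ} (hw : ‖w‖ < 1) :
    HasSum (fun n => (∫ a, f a / p a ^ (n + 1) ∂μ) * w ^ n) (cauchyTransform μ f p w) := by
  have hp₀ : ∀ a, p a ≠ 0 := fun a h => by
    have := hp₁ a
    rw [h, norm_zero] at this
    linarith
  have hpw : ∀ a, p a - w ≠ 0 := fun a h => by
    have := hp₁ a
    rw [sub_eq_zero.mp h] at this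
    linarith
  have hinv : ∀ a, ‖(p a)⁻¹‖ ≤ 1 := fun a => by
    rw [norm_inv]
    exact inv_le_one_of_one_le₀ (hp₁ a)
  have hp' : AEStronglyMeasurable (fun a => (p a)⁻¹) μ := hp.aemeasurable.inv.aestronglyMeasurable
  have hsum := hasSum_integral_mul_geometric (f := fun a => f a * (p a)⁻¹)
    (q := fun a => w * (p a)⁻¹) (hf.mul_bdd hp' (ae_of_all _ hinv))
    (aestronglyMeasurable_const.mul hp') (norm_nonneg w) hw
    fun a => by
      rw [norm_mul]
      exact mul_le_of_le_one_right (norm_nonneg w) (hinv a)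
  convert hsum using 1
  · ext n
    rw [← integral_mul_const]
    congr 1
    ext a
    have := hp₀ a
    rw [mul_pow, inv_pow, pow_succ]
    field_simp
  · refine integral_congr_ae (ae_of_all _ fun a => ?_)
    have := hp₀ a
    have := hpw a
    field_simp

theorem differentiableOn_cauchyTransform {K : Set ℂ} (hf : Integrable f μ)
    (hp : AEStronglyMeasurable p μ) (hK : IsClosed K) (hfK : ∀ᵐ a ∂μ, f a ≠ 0 → p a ∈ K) :
    DifferentiableOn ℂ (cauchyTransform μ f p) Kᶜ := by
  intro w₀ hw₀
  obtain ⟨ε, hε, hball⟩ := Metric.isOpen_iff.mp hK.isOpen_compl w₀ hw₀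
  have hsep : ∀ᵐ a ∂μ, ∀ w ∈ ball w₀ (ε / 2), f a ≠ 0 → ε / 2 ≤ ‖p a - w‖ := by
    filter_upwards [hfK] with a ha w hw hfa
    have h₁ : ε ≤ dist (p a) w₀ := not_lt.mp fun h => hball h (ha hfa)
    have h₂ := dist_triangle (p a) w w₀
    rw [mem_ball] at hw
    rw [← dist_eq_norm]
    linarith
  have hmeas : ∀ w : ℂ, AEStronglyMeasurable (fun a => f a / (p a - w)) μ := fun w =>
    (hf.aemeasurable.div (hp.aemeasurable.sub_const w)).aestronglyMeasurable
  have hbound : ∀ᵐ a ∂μ, ∀ w ∈ ball w₀ (ε / 2), ‖f a / (p a - w) ^ 2‖ ≤ ‖f a‖ / (ε / 2) ^ 2 := by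
    filter_upwards [hsep] with a ha w hw
    rcases eq_or_ne (f a) 0 with hfa | hfa
    · simp [hfa]
    · rw [norm_div, norm_pow]
      gcongr
      exact ha w hw hfa
  have hderiv : ∀ᵐ a ∂μ, ∀ w ∈ ball w₀ (ε / 2),
      HasDerivAt (fun v => f a / (p a - v)) (f a / (p a - w) ^ 2) w := by
    filter_upwards [hsep] with a ha w hw
    rcases eq_or_ne (f a) 0 with hfa | hfa
    · simpa [hfa] using hasDerivAt_const w (0 : ℂ)
    · refine hasDerivAt_div_const_sub _ _ _ fun h => ?_
      have := ha w hw hfa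
      rw [h, norm_zero] at this
      linarith
  have hint : Integrable (fun a => f a / (p a - w₀)) μ := by
    refine (hf.norm.div_const (ε / 2)).mono' (hmeas w₀) ?_
    filter_upwards [hsep] with a ha
    rcases eq_or_ne (f a) 0 with hfa | hfa
    · simp [hfa]
    · rw [norm_div]
      gcongr
      exact ha w₀ (mem_ball_self (half_pos hε)) hfa
  exact (hasDerivAt_integral_of_dominated_loc_of_deriv_le (ball_mem_nhds w₀ (half_pos hε))
    (Eventually.of_forall hmeas) hint
    (hf.aemeasurable.div ((hp.aemeasurable.sub_const w₀).pow_const 2)).aestronglyMeasurable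
    hbound (hf.norm.div_const _) hderiv).2.differentiableAt.differentiableWithinAt

end CauchyTransform

theorem eq_zero_of_hasSum_mul_pow {a : ℕ → ℂ} {r : ℝ} (hr : 0 < r)
    (h : ∀ w : ℂ, ‖w‖ < r → HasSum (fun n => a n * w ^ n) 0) : a = 0 := by
  set s : NNReal := ⟨r / 2, by positivity⟩
  have hs₀ : 0 < (s : ℝ) := half_pos hr
  have hs : (s : ℝ) < r := half_lt_self hr
  have hps : HasFPowerSeriesOnBall (fun _ => (0 : ℂ)) (FormalMultilinearSeries.ofScalars ℂ a) 0 s :=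
    { r_le := by
        refine FormalMultilinearSeries.le_radius_of_tendsto _ (l := 0) ?_
        simp_rw [FormalMultilinearSeries.ofScalars_norm]
        simpa using (h s (by simpa using hs)).summable.norm.tendsto_atTop_zero
      r_pos := ENNReal.coe_pos.2 (NNReal.coe_pos.1 hs₀)
      hasSum := fun {y} hy => by
        rw [FormalMultilinearSeries.ofScalars_apply_eq']
        simpa using h y (by
          rw [Metric.mem_eball, edist_zero_right] at hy
          exact (by exact_mod_cast hy : ‖y‖ < s).trans hs) }
  exact (FormalMultilinearSeries.ofScalars_series_eq_zero ℂ).mp hps.hasFPowerSeriesAt.eq_zero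

theorem eqOn_zero_ball_of_differentiableOn_compl {g : ℂ → ℂ} {K : Set ℂ} (hK : IsClosed K)
    (hKs : K ⊆ sphere 0 1) {ζ : ℂ} (hζ : ‖ζ‖ = 1) (hζK : ζ ∉ K)
    (hg : DifferentiableOn ℂ g Kᶜ) (hout : ∀ w, 1 < ‖w‖ → g w = 0) :
    EqOn g 0 (ball 0 1) := by
  obtain ⟨ρ, hρ, hball⟩ := Metric.isOpen_iff.mp hK.isOpen_compl ζ hζK
  set δ := min ρ 1
  have hδ : 0 < δ := lt_min hρ one_pos
  have hδ₁ : δ ≤ 1 := min_le_right _ _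
  have hdisc : ball (0 : ℂ) 1 ⊆ Kᶜ := fun z hz hzK => by
    have h₁ := hKs hzK
    rw [mem_sphere_zero_iff_norm] at h₁
    rw [mem_ball_zero_iff] at hz
    linarith
  have hW : ball (0 : ℂ) 1 ∪ ball ζ δ ⊆ Kᶜ :=
    union_subset hdisc ((ball_subset_ball (min_le_left _ _)).trans hball)
  -- the points `(1 ∓ δ/2) ζ` lie in `ball ζ δ`, the first in the disc and the second outside it
  have hscale : ∀ c : ℝ, 0 ≤ c → ‖(c : ℂ) * ζ‖ = c ∧ dist ((c : ℂ) * ζ) ζ = |c - 1| := by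
    intro c hc
    refine ⟨by rw [norm_mul, hζ, mul_one, norm_real, Real.norm_of_nonneg hc], ?_⟩
    rw [dist_eq_norm, ← sub_one_mul, norm_mul, hζ, mul_one, ← ofReal_one, ← ofReal_sub,
      norm_real, Real.norm_eq_abs]
  obtain ⟨hin₁, hin₂⟩ := hscale (1 - δ / 2) (by linarith)
  obtain ⟨hout₁, hout₂⟩ := hscale (1 + δ / 2) (by linarith)
  have hpre : IsPreconnected (ball (0 : ℂ) 1 ∪ ball ζ δ) :=
    IsPreconnected.union (((1 - δ / 2 : ℝ) : ℂ) * ζ)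
      (by rw [mem_ball_zero_iff, hin₁]; linarith)
      (by rw [mem_ball, hin₂, abs_of_neg (by linarith)]; linarith)
      (convex_ball _ _).isPreconnected (convex_ball _ _).isPreconnected
  have hzero : g =ᶠ[𝓝 (((1 + δ / 2 : ℝ) : ℂ) * ζ)] 0 := by
    filter_upwards [(isOpen_lt continuous_const continuous_norm).mem_nhds
      (show 1 < ‖((1 + δ / 2 : ℝ) : ℂ) * ζ‖ by rw [hout₁]; linarith)] with w hw
    exact hout w hw
  exact ((hg.analyticOnNhd hK.isOpen_compl).mono hW).eqOn_zero_of_preconnected_of_eventuallyEq_zero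
    hpre (Or.inr (by rw [mem_ball, hout₂, abs_of_pos (by linarith)]; linarith)) hzero
    |>.mono subset_union_left

def circlePt (ω : ℝ) : ℂ := Circle.exp (-ω)

theorem norm_circlePt (ω : ℝ) : ‖circlePt ω‖ = 1 := Circle.norm_coe _

theorem continuous_circlePt : Continuous circlePt :=
  continuous_subtype_val.comp (Circle.exp.continuous.comp continuous_neg)

theorem circlePt_add_two_pi_mul_int (ω : ℝ) (k : ℤ) : circlePt (ω + 2 * π * k) = circlePt ω :=
  congrArg Subtype.val (Circle.exp_eq_exp.mpr ⟨-k, by push_cast; ring⟩)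

theorem cexp_I_mul_int (ω : ℝ) (t : ℤ) : cexp (I * ω * t) = circlePt ω ^ (-t) := by
  rw [circlePt, Circle.coe_exp, ← exp_int_mul]
  congr 1
  push_cast
  ring

theorem invZ_eq_integral_mul_zpow (X : ℝ → ℂ) (t : ℤ) :
    invZ X t = ((1 / (2 * π) : ℝ) : ℂ) * ∫ ω in Ioc (-π) π, X ω * circlePt ω ^ (-t) := by
  simp_rw [invZ, cexp_I_mul_int]

theorem integrable_mul_cexp_I_mul_int {X : ℝ → ℂ} {μ : Measure ℝ} (hX : Integrable X μ) (t : ℤ) :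
    Integrable (fun ω : ℝ => X ω * cexp (I * ω * t)) μ :=
  hX.mul_bdd (by fun_prop : Continuous fun ω : ℝ => cexp (I * ω * t)).aestronglyMeasurable
    (ae_of_all _ fun ω => by rw [cexp_I_mul_int, norm_zpow, norm_circlePt, one_zpow])

theorem invZ_sub {X Y : ℝ → ℂ} (hX : Integrable X (volume.restrict (Ioc (-π) π)))
    (hY : Integrable Y (volume.restrict (Ioc (-π) π))) (t : ℤ) :
    invZ (X - Y) t = invZ X t - invZ Y t := by
  simp only [invZ, Pi.sub_apply, sub_mul, ← mul_sub]
  rw [integral_sub (integrable_mul_cexp_I_mul_int hX t) (integrable_mul_cexp_I_mul_int hY t)]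

def Arc.circleImage (I : Arc) : Set ℂ :=
  circlePt '' Icc (I.mid - I.halfLen) (I.mid + I.halfLen)

theorem Arc.isClosed_circleImage (I : Arc) : IsClosed I.circleImage :=
  (isCompact_Icc.image continuous_circlePt).isClosed

theorem Arc.circleImage_subset_sphere (I : Arc) : I.circleImage ⊆ sphere 0 1 := by
  rintro _ ⟨ω, -, rfl⟩
  rw [mem_sphere_zero_iff_norm, norm_circlePt]

theorem Arc.circlePt_mem_circleImage {I : Arc} {ω : ℝ} (hω : ω ∈ I.set) :
    circlePt ω ∈ I.circleImage := by
  obtain ⟨-, k, hk⟩ := hω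
  obtain ⟨hk₁, hk₂⟩ := abs_lt.mp hk
  exact ⟨ω + 2 * π * k, ⟨by linarith, by linarith⟩, circlePt_add_two_pi_mul_int ω k⟩

theorem Arc.circlePt_antipode_not_mem (I : Arc) : circlePt (I.mid + π) ∉ I.circleImage := by
  rintro ⟨u, ⟨hu₁, hu₂⟩, hu⟩
  obtain ⟨n, hn⟩ := Circle.exp_eq_exp.mp (Subtype.ext hu)
  have := I.halfLen_lt
  rcases le_or_gt n 0 with h | h
  · have : (n : ℝ) ≤ 0 := by exact_mod_cast h
    nlinarith [pi_pos]
  · have : (1 : ℝ) ≤ n := by exact_mod_cast h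
    nlinarith [pi_pos]

theorem invZ_eq_zero_of_forall_nonpos {I : Arc} {X : ℝ → ℂ}
    (hX : Integrable X (volume.restrict (Ioc (-π) π)))
    (hXI : ∀ᵐ ω ∂volume.restrict (Ioc (-π) π), ω ∉ I.set → X ω = 0)
    (h₀ : ∀ t ≤ 0, invZ X t = 0) (t : ℤ) : invZ X t = 0 := by
  have hp : AEStronglyMeasurable circlePt (volume.restrict (Ioc (-π) π)) :=
    continuous_circlePt.aestronglyMeasurable
  have hcoeff : ∀ t : ℤ, invZ X t = 0 ↔ ∫ ω in Ioc (-π) π, X ω * circlePt ω ^ (-t) = 0 := by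
    intro t
    rw [invZ_eq_integral_mul_zpow, mul_eq_zero, or_iff_right]
    exact ofReal_ne_zero.mpr (by positivity)
  set G := cauchyTransform (volume.restrict (Ioc (-π) π)) X circlePt
  have hdiff : DifferentiableOn ℂ G I.circleImageᶜ := by
    refine differentiableOn_cauchyTransform hX hp I.isClosed_circleImage ?_
    filter_upwards [hXI] with ω hω hXω
    exact I.circlePt_mem_circleImage (not_not.mp (mt hω hXω))
  have hout : ∀ w : ℂ, 1 < ‖w‖ → G w = 0 := by
    intro w hw
    refine (hasSum_cauchyTransform_of_one_lt_norm hX hp (fun ω => (norm_circlePt ω).le) hw).unique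
      ?_
    convert hasSum_zero with n
    have := (hcoeff (-n)).mp (h₀ _ (by omega))
    simp_rw [neg_neg, zpow_natCast] at this
    rw [this, neg_zero, zero_div]
  have hin : EqOn G 0 (ball 0 1) :=
    eqOn_zero_ball_of_differentiableOn_compl I.isClosed_circleImage I.circleImage_subset_sphere
      (norm_circlePt _) I.circlePt_antipode_not_mem hdiff hout
  have hpos : ∀ n : ℕ, ∫ ω in Ioc (-π) π, X ω / circlePt ω ^ (n + 1) = 0 :=
    congrFun <| eq_zero_of_hasSum_mul_pow one_pos fun w hw => by
      have hGw : G w = 0 := hin (mem_ball_zero_iff.mpr hw)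
      rw [← hGw]
      exact hasSum_cauchyTransform_of_norm_lt_one hX hp (fun ω => (norm_circlePt ω).ge) hw
  rcases le_or_gt t 0 with ht | ht
  · exact h₀ t ht
  obtain ⟨n, rfl⟩ : ∃ n : ℕ, t = n + 1 := ⟨(t - 1).toNat, by omega⟩
  rw [hcoeff, ← hpos n]
  simp_rw [zpow_neg, div_eq_mul_inv, ← Nat.cast_succ, zpow_natCast]

theorem BandLimited.eq_of_forall_nonpos {I : Arc} {y z : ℤ → ℂ} (hy : BandLimited I.set y)
    (hz : BandLimited I.set z) (h : ∀ t ≤ 0, y t = z t) : y = z := by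
  obtain ⟨-, Y, hY, hYI, hYy⟩ := hy
  obtain ⟨-, Z, hZ, hZI, hZz⟩ := hz
  have hYi := hY.integrable one_le_two
  have hZi := hZ.integrable one_le_two
  have hsub : ∀ t, invZ (Y - Z) t = y t - z t := fun t => by
    rw [invZ_sub hYi hZi, hYy, hZz]
  have hXI : ∀ᵐ ω ∂volume.restrict (Ioc (-π) π), ω ∉ I.set → (Y - Z) ω = 0 := by
    filter_upwards [hYI, hZI] with ω hY hZ hω
    rw [Pi.sub_apply, hY hω, hZ hω, sub_self]
  have hzero := invZ_eq_zero_of_forall_nonpos (hYi.sub hZi) hXI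
    fun t ht => by rw [hsub, h t ht, sub_self]
  funext t
  rw [← sub_eq_zero, ← hsub, hzero]

/-- for `I ∈ J` and `x ∈ ℓ₂^{−,LBL}(I)`, there is a unique `x_BL ∈ ℓ₂^{BL}(I)`
with `x(t) = x_BL(t)` for all `t ≤ 0`: a band-limited sequence with spectrum in a proper arc
is uniquely determined by its trace on `{t ≤ 0}`. -/
theorem stmt_6 (I : Arc) (x : NegSeq) (hx : LBL I.set x) :
    ∃! xBL : ℤ → ℂ, BandLimited I.set xBL ∧ ∀ t : {t : ℤ // t ≤ 0}, x t = xBL t.1 := by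
  obtain ⟨xBL, hBL, htr⟩ := hx
  refine ⟨xBL, ⟨hBL, htr⟩, fun y ⟨hy, hytr⟩ => hy.eq_of_forall_nonpos hBL fun t ht => ?_⟩
  rw [← hytr ⟨t, ht⟩, htr ⟨t, ht⟩]
end
end
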